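/- The Lie-Yamaguti algebra structure 𝓛₂₉ on ℂ⁴, given by [e₁,e₂]=e₃, [e₁,e₃]=e₄, [e₂,e₃]=e₄, [e₁,e₃,e₂]=e₄, [e₂,e₃,e₁]=e₄, degenerates to the structure 𝓛₂₇ given by [e₁,e₂]=e₃, [e₁,e₃,e₂]=e₄, [e₂,e₃,e₁]=e₄. -/

import Mathlib

open Filter Matrix Topology

/-- ℂ⁴ -/
abbrev V4 : Type := Fin 4 → ℂ

/-- GL₄(ℂ) -/
abbrev GL4 := Matrix.GeneralLinearGroup (Fin 4) ℂ

/-- structure constants of a bilinear map on ℂ⁴: `μ i j` is the value on `(eᵢ, eⱼ)`. -/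
abbrev Bil4 := Fin 4 → Fin 4 → V4

/-- structure constants of a trilinear map on ℂ⁴. -/
abbrev Tril4 := Fin 4 → Fin 4 → Fin 4 → V4

/-- standard basis vectors -/
noncomputable def e4 (k : Fin 4) : V4 := Pi.single k (1 : ℂ)

/-- action of `g ∈ GL₄(ℂ)` on a bilinear map: `(g·μ)(x,y) = g μ(g⁻¹x, g⁻¹y)`,
in structure constants. -/
noncomputable def actBil (g : GL4) (μ : Bil4) : Bil4 := fun i j =>
  (g : Matrix (Fin 4) (Fin 4) ℂ).mulVec
    (∑ p, ∑ q,
      (((g⁻¹ : GL4) : Matrix (Fin 4) (Fin 4) ℂ) p i *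
       ((g⁻¹ : GL4) : Matrix (Fin 4) (Fin 4) ℂ) q j) • μ p q)

/-- action of `g ∈ GL₄(ℂ)` on a trilinear map:
`(g·τ)(x,y,z) = g τ(g⁻¹x, g⁻¹y, g⁻¹z)`, in structure constants. -/
noncomputable def actTril (g : GL4) (τ : Tril4) : Tril4 := fun i j k =>
  (g : Matrix (Fin 4) (Fin 4) ℂ).mulVec
    (∑ p, ∑ q, ∑ r,
      (((g⁻¹ : GL4) : Matrix (Fin 4) (Fin 4) ℂ) p i *
       ((g⁻¹ : GL4) : Matrix (Fin 4) (Fin 4) ℂ) q j *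
       ((g⁻¹ : GL4) : Matrix (Fin 4) (Fin 4) ℂ) r k) • τ p q r)

/-- `(μ,τ)` degenerates to `(lam,sig)`: there is a curve `g : ℂ∖{0} → GL₄(ℂ)` with
`g(t)·μ → lam` and `g(t)·τ → sig` as `t → 0`. -/
def Degenerates (μ : Bil4) (τ : Tril4) (lam : Bil4) (sig : Tril4) : Prop :=
  ∃ g : ℂ → GL4,
    Tendsto (fun t => actBil (g t) μ) (𝓝[≠] (0 : ℂ)) (𝓝 lam) ∧
    Tendsto (fun t => actTril (g t) τ) (𝓝[≠] (0 : ℂ)) (𝓝 sig)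

noncomputable def μL29 : Bil4 := fun i j =>
  if i = (0 : Fin 4) ∧ j = (1 : Fin 4) then e4 2
  else if i = (1 : Fin 4) ∧ j = (0 : Fin 4) then -(e4 2)
  else if i = (0 : Fin 4) ∧ j = (2 : Fin 4) then e4 3
  else if i = (2 : Fin 4) ∧ j = (0 : Fin 4) then -(e4 3)
  else if i = (1 : Fin 4) ∧ j = (2 : Fin 4) then e4 3
  else if i = (2 : Fin 4) ∧ j = (1 : Fin 4) then -(e4 3)
  else 0

noncomputable def τL29 : Tril4 := fun i j k =>
  if i = (0 : Fin 4) ∧ j = (2 : Fin 4) ∧ k = (1 : Fin 4) then e4 3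
  else if i = (2 : Fin 4) ∧ j = (0 : Fin 4) ∧ k = (1 : Fin 4) then -(e4 3)
  else if i = (1 : Fin 4) ∧ j = (2 : Fin 4) ∧ k = (0 : Fin 4) then e4 3
  else if i = (2 : Fin 4) ∧ j = (1 : Fin 4) ∧ k = (0 : Fin 4) then -(e4 3)
  else 0

noncomputable def μL27 : Bil4 := fun i j =>
  if i = (0 : Fin 4) ∧ j = (1 : Fin 4) then e4 2
  else if i = (1 : Fin 4) ∧ j = (0 : Fin 4) then -(e4 2)
  else 0

noncomputable def τL27 : Tril4 := fun i j k =>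
  if i = (0 : Fin 4) ∧ j = (2 : Fin 4) ∧ k = (1 : Fin 4) then e4 3
  else if i = (2 : Fin 4) ∧ j = (0 : Fin 4) ∧ k = (1 : Fin 4) then -(e4 3)
  else if i = (1 : Fin 4) ∧ j = (2 : Fin 4) ∧ k = (0 : Fin 4) then e4 3
  else if i = (2 : Fin 4) ∧ j = (1 : Fin 4) ∧ k = (0 : Fin 4) then -(e4 3)
  else 0

/-!
Contract along the one-parameter subgroup `g(t) = diag(t, t, t², t⁴)`. A diagonal `diag(d)`
rescales the structure constant `[eᵢ,eⱼ]ₖ` by `dₖ / (dᵢ dⱼ)` (and `[eᵢ,eⱼ,eₖ]ₗ` by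
`dₗ / (dᵢ dⱼ dₖ)`), so for `dₖ = t ^ wₖ` each constant is multiplied by `t` to the power of its
weight.
With `w = (1, 1, 2, 4)` every constant of 𝓛₂₉ has nonnegative weight: `[e₁,e₃]` and `[e₂,e₃]` have
weight one and vanish as `t → 0`, while the remaining constants, those of 𝓛₂₇, have weight zero.
-/

def diagGL (u : Fin 4 → ℂˣ) : GL4 :=
  Units.map (diagonalRingHom (Fin 4) ℂ).toMonoidHom (MulEquiv.piUnits.symm u)

lemma coe_diagGL (u : Fin 4 → ℂˣ) :
    ((diagGL u : GL4) : Matrix (Fin 4) (Fin 4) ℂ) = diagonal fun k => (u k : ℂ) :=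
  rfl

lemma coe_diagGL_inv (u : Fin 4 → ℂˣ) :
    (((diagGL u)⁻¹ : GL4) : Matrix (Fin 4) (Fin 4) ℂ) = diagonal fun k => (((u k)⁻¹ : ℂˣ) : ℂ) :=
  rfl

lemma actBil_diagGL (u : Fin 4 → ℂˣ) (μ : Bil4) (i j k : Fin 4) :
    actBil (diagGL u) μ i j k = ((u k / (u i * u j) : ℂˣ) : ℂ) * μ i j k := by
  rw [actBil, coe_diagGL, coe_diagGL_inv, mulVec_diagonal]
  simp only [diagonal_apply, Finset.sum_apply, Pi.smul_apply, smul_eq_mul, mul_ite, ite_mul,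
    zero_mul, mul_zero, Finset.sum_ite_eq', Finset.mem_univ, ↓reduceIte, Units.val_inv_eq_inv_val,
    Units.val_div_eq_div_val, Units.val_mul]
  ring

lemma actTril_diagGL (u : Fin 4 → ℂˣ) (τ : Tril4) (i j k l : Fin 4) :
    actTril (diagGL u) τ i j k l = ((u l / (u i * u j * u k) : ℂˣ) : ℂ) * τ i j k l := by
  rw [actTril, coe_diagGL, coe_diagGL_inv, mulVec_diagonal]
  simp only [diagonal_apply, Finset.sum_apply, Pi.smul_apply, smul_eq_mul, mul_ite, ite_mul,
    zero_mul, mul_zero, Finset.sum_ite_eq', Finset.mem_univ, ↓reduceIte, Units.val_inv_eq_inv_val,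
    Units.val_div_eq_div_val, Units.val_mul]
  ring

noncomputable def torusCurve (w : Fin 4 → ℤ) (t : ℂ) : GL4 :=
  if ht : t = 0 then 1 else diagGL fun k => Units.mk0 t ht ^ w k

lemma actBil_torusCurve (w : Fin 4 → ℤ) (μ : Bil4) {t : ℂ} (ht : t ≠ 0) (i j k : Fin 4) :
    actBil (torusCurve w t) μ i j k = t ^ (w k - w i - w j) * μ i j k := by
  rw [torusCurve, dif_neg ht, actBil_diagGL, ← _root_.zpow_add, div_eq_mul_inv,
    ← _root_.zpow_sub, sub_add_eq_sub_sub, Units.val_zpow_eq_zpow_val, Units.val_mk0]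

lemma actTril_torusCurve (w : Fin 4 → ℤ) (τ : Tril4) {t : ℂ} (ht : t ≠ 0) (i j k l : Fin 4) :
    actTril (torusCurve w t) τ i j k l = t ^ (w l - w i - w j - w k) * τ i j k l := by
  rw [torusCurve, dif_neg ht, actTril_diagGL, ← _root_.zpow_add, ← _root_.zpow_add,
    div_eq_mul_inv, ← _root_.zpow_sub, sub_add_eq_sub_sub, sub_add_eq_sub_sub,
    Units.val_zpow_eq_zpow_val, Units.val_mk0]

lemma tendsto_zpow_mul_nhdsNE_zero {n : ℤ} {c : ℂ} (h : c ≠ 0 → 0 ≤ n) :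
    Tendsto (fun t : ℂ => t ^ n * c) (𝓝[≠] 0) (𝓝 (if n = 0 then c else 0)) := by
  rcases eq_or_ne c 0 with rfl | hc
  · simp
  have hcont : ContinuousAt (fun t : ℂ => t ^ n * c) 0 :=
    (continuousAt_zpow₀ 0 n (Or.inr (h hc))).mul continuousAt_const
  simpa [_root_.zero_zpow_eq, ite_mul] using
    hcont.tendsto.mono_left (nhdsWithin_le_nhds (s := {0}ᶜ))

def weightZeroBil (w : Fin 4 → ℤ) (μ : Bil4) : Bil4 := fun i j k =>
  if w k - w i - w j = 0 then μ i j k else 0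

def weightZeroTril (w : Fin 4 → ℤ) (τ : Tril4) : Tril4 := fun i j k l =>
  if w l - w i - w j - w k = 0 then τ i j k l else 0

lemma weightZeroTril_eq_self {w : Fin 4 → ℤ} {τ : Tril4}
    (h : ∀ i j k l, τ i j k l ≠ 0 → w l - w i - w j - w k = 0) : weightZeroTril w τ = τ := by
  funext i j k l
  by_cases hτ : τ i j k l = 0 <;> simp_all [weightZeroTril]

theorem degenerates_weightZero {w : Fin 4 → ℤ} {μ : Bil4} {τ : Tril4}
    (hμ : ∀ i j k, μ i j k ≠ 0 → 0 ≤ w k - w i - w j)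
    (hτ : ∀ i j k l, τ i j k l ≠ 0 → 0 ≤ w l - w i - w j - w k) :
    Degenerates μ τ (weightZeroBil w μ) (weightZeroTril w τ) := by
  refine ⟨torusCurve w, ?_, ?_⟩
  · refine tendsto_pi_nhds.2 fun i => tendsto_pi_nhds.2 fun j => tendsto_pi_nhds.2 fun k => ?_
    refine (tendsto_zpow_mul_nhdsNE_zero (hμ i j k)).congr' ?_
    filter_upwards [self_mem_nhdsWithin] with t ht
    exact (actBil_torusCurve w μ ht i j k).symm
  · refine tendsto_pi_nhds.2 fun i => tendsto_pi_nhds.2 fun j => tendsto_pi_nhds.2 fun k =>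
      tendsto_pi_nhds.2 fun l => ?_
    refine (tendsto_zpow_mul_nhdsNE_zero (hτ i j k l)).congr' ?_
    filter_upwards [self_mem_nhdsWithin] with t ht
    exact (actTril_torusCurve w τ ht i j k l).symm

def weightsL29 : Fin 4 → ℤ := ![1, 1, 2, 4]

lemma μL29_weight_nonneg (i j k : Fin 4) (h : μL29 i j k ≠ 0) :
    0 ≤ weightsL29 k - weightsL29 i - weightsL29 j := by
  fin_cases i <;> fin_cases j <;> fin_cases k <;> simp_all [μL29, e4, weightsL29]

lemma τL29_weight_eq_zero (i j k l : Fin 4) (h : τL29 i j k l ≠ 0) :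
    weightsL29 l - weightsL29 i - weightsL29 j - weightsL29 k = 0 := by
  fin_cases i <;> fin_cases j <;> fin_cases k <;> fin_cases l <;>
    simp_all [τL29, e4, weightsL29]

lemma weightZeroBil_μL29 : weightZeroBil weightsL29 μL29 = μL27 := by
  funext i j k
  fin_cases i <;> fin_cases j <;> fin_cases k <;>
    simp [weightZeroBil, μL29, μL27, e4, weightsL29]

/-- 𝓛₂₉ degenerates to 𝓛₂₇. -/
theorem stmt5 : Degenerates μL29 τL29 μL27 τL27 := by
  have hτL27 : weightZeroTril weightsL29 τL29 = τL27 := weightZeroTril_eq_self τL29_weight_eq_zero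
  rw [← weightZeroBil_μL29, ← hτL27]
  exact degenerates_weightZero μL29_weight_nonneg fun i j k l h =>
    (τL29_weight_eq_zero i j k l h).ge
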